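/- arXiv:2109.05284 — 2 statements merged into one kernel-verified Lean document; each statement's English description precedes it below -/
import Mathlib

section
/- Let X ⊆ {0,1}^n be the solution set of a system of polynomial constraints, let J be a tree decomposition of the dependency hypergraph of this system, and for each bag U let D_U be a probability distribution supported on the set X_U of locally feasible vectors on U (restrictions to U of elements of X). If for every edge (U,V) of J the distributions D_U and D_V agree on their marginals over U∩V, then there exists a distribution D supported on X whose marginal on every bag U equals D_U. -/
/-!
Induct on the tree by removing a leaf `ℓ` with neighbour `p`. By the running intersection
property, `bag ℓ` meets every other bag inside `bag p ∩ bag ℓ`. Given a distribution `μ` with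
the prescribed marginals on the remaining bags, couple `μ` with `D ℓ` conditionally
independently given the values on `bag p ∩ bag ℓ` (possible since both have the marginal of
`D p` there) and overwrite `bag ℓ` by the second component: the marginal on `bag ℓ` becomes
`D ℓ` and the other marginals do not change. Finally, each point of the support restricts on
every bag to a locally feasible vector, and each constraint lives inside some bag, so the
support lies in `X`.
-/

namespace PMF

variable {α β γ : Type*}

theorem map_congr_of_support {p : PMF α} {f g : α → β} (h : ∀ a ∈ p.support, f a = g a) :
    p.map f = p.map g := by
  ext b
  simp only [map_apply]
  refine tsum_congr fun a => ?_
  by_cases ha : a ∈ p.support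
  · rw [h a ha]
  · simp [(mem_support_iff p a).not_left.mp ha]

open Classical in
/-- Junk value `ν` when the fibre `q ⁻¹' {c}` is `ν`-null. -/
noncomputable def condFiber (ν : PMF β) (q : β → γ) (c : γ) : PMF β :=
  if h : ∃ b ∈ q ⁻¹' {c}, b ∈ ν.support then ν.filter (q ⁻¹' {c}) h else ν

theorem condFiber_of_mem_support_map {ν : PMF β} {q : β → γ} {c : γ}
    (hc : c ∈ (ν.map q).support) :
    ∃ h, ν.condFiber q c = ν.filter (q ⁻¹' {c}) h := by
  obtain ⟨b, hb, rfl⟩ := (mem_support_map_iff _ _ _).mp hc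
  have h : ∃ b' ∈ q ⁻¹' {q b}, b' ∈ ν.support := ⟨b, rfl, hb⟩
  exact ⟨h, dif_pos h⟩

theorem eq_of_mem_support_condFiber {ν : PMF β} {q : β → γ} {c : γ}
    (hc : c ∈ (ν.map q).support) {b : β} (hb : b ∈ (ν.condFiber q c).support) : q b = c := by
  obtain ⟨h, hcond⟩ := condFiber_of_mem_support_map hc
  rw [hcond, mem_support_filter_iff] at hb
  exact hb.1

theorem tsum_indicator_preimage_singleton (ν : PMF β) (q : β → γ) (c : γ) :
    ∑' b, (q ⁻¹' {c}).indicator ν b = ν.map q c := by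
  rw [← toOuterMeasure_apply, ← toOuterMeasure_map_apply, toOuterMeasure_apply_singleton]

theorem bind_condFiber (ν : PMF β) (q : β → γ) : (ν.map q).bind (ν.condFiber q) = ν := by
  ext b
  rw [bind_apply, tsum_eq_single (q b)]
  · by_cases hb : ν.map q (q b) = 0
    · have hle : ν b ≤ ν.map q (q b) := by
        rw [← tsum_indicator_preimage_singleton]
        exact le_of_eq_of_le (by simp) (ENNReal.le_tsum b)
      rw [hb, zero_mul]
      exact (nonpos_iff_eq_zero.mp (hb ▸ hle)).symm
    · obtain ⟨h, hcond⟩ := condFiber_of_mem_support_map ((mem_support_iff _ _).mpr hb)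
      rw [hcond, filter_apply, tsum_indicator_preimage_singleton,
        Set.indicator_of_mem (show b ∈ q ⁻¹' {q b} from rfl), mul_left_comm,
        ENNReal.mul_inv_cancel hb (apply_ne_top _ _), mul_one]
  · intro c hc
    by_cases hc0 : ν.map q c = 0
    · rw [hc0, zero_mul]
    · obtain ⟨h, hcond⟩ := condFiber_of_mem_support_map ((mem_support_iff _ _).mpr hc0)
      rw [hcond, filter_apply_eq_zero_of_notMem h (fun hbc => hc hbc.symm), mul_zero]

theorem exists_coupling_of_map_eq (μ : PMF α) (ν : PMF β) {p : α → γ} {q : β → γ}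
    (h : μ.map p = ν.map q) :
    ∃ π : PMF (α × β), π.map Prod.fst = μ ∧ π.map Prod.snd = ν ∧
      ∀ z ∈ π.support, p z.1 = q z.2 := by
  refine ⟨μ.bind fun a => (ν.condFiber q (p a)).map (Prod.mk a), ?_, ?_, ?_⟩
  · simp only [map_bind, map_comp]
    exact (congrArg μ.bind (funext fun a => map_const _ a)).trans (bind_pure μ)
  · have hsnd (a : α) : Prod.snd ∘ Prod.mk (β := β) a = id := rfl
    simp only [map_bind, map_comp, hsnd, map_id]
    rw [← Function.comp_def (ν.condFiber q) p, ← bind_map, h, bind_condFiber]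
  · intro z hz
    obtain ⟨a, ha, hz⟩ := (mem_support_bind_iff _ _ _).mp hz
    obtain ⟨b, hb, rfl⟩ := (mem_support_map_iff _ _ _).mp hz
    have hpa : p a ∈ (ν.map q).support := h ▸ (mem_support_map_iff _ _ _).mpr ⟨a, ha, rfl⟩
    exact (eq_of_mem_support_condFiber hpa hb).symm

end PMF

theorem PMF.exists_extend_of_map_restrict_eq {V β : Type*} [DecidableEq V] (μ : PMF (V → β))
    {s I : Finset V} (hI : I ⊆ s) (ν : PMF (s → β))
    (h : μ.map I.restrict = ν.map (Finset.restrict₂ (π := fun _ => β) hI)) :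
    ∃ μ' : PMF (V → β), μ'.map s.restrict = ν ∧
      ∀ t : Finset V, t ∩ s ⊆ I → μ'.map t.restrict = μ.map t.restrict := by
  obtain ⟨π, hfst, hsnd, hπ⟩ := PMF.exists_coupling_of_map_eq μ ν h
  let glue (z : (V → β) × (s → β)) : V → β := Function.extend Subtype.val z.2 z.1
  refine ⟨π.map glue, ?_, fun t ht => ?_⟩
  · rw [PMF.map_comp, ← hsnd]
    congr 1
    funext z
    exact funext (Subtype.val_injective.extend_apply z.2 z.1)
  · rw [PMF.map_comp, ← hfst, PMF.map_comp]
    refine PMF.map_congr_of_support fun z hz => funext fun v => ?_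
    by_cases hvs : v.1 ∈ s
    · have hvI : v.1 ∈ I := ht (Finset.mem_inter.mpr ⟨v.2, hvs⟩)
      calc glue z v.1 = z.2 ⟨v.1, hvs⟩ :=
            Subtype.val_injective.extend_apply z.2 z.1 ⟨v.1, hvs⟩
        _ = z.1 v.1 := (congrFun (hπ z hz) ⟨v.1, hvI⟩).symm
    · exact Function.extend_apply' _ _ _ fun ⟨w, hw⟩ => hvs (hw ▸ w.2)

namespace SimpleGraph

variable {ι V : Type*}

def RunningIntersection (T : SimpleGraph ι) (bag : ι → Finset V) : Prop :=
  ∀ (v : V) {i j : ι} (P : T.Walk i j), P.IsPath → v ∈ bag i → v ∈ bag j →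
    ∀ k ∈ P.support, v ∈ bag k

theorem runningIntersection_of_preconnected_induce {T : SimpleGraph ι} (hT : T.IsAcyclic)
    {bag : ι → Finset V} (h : ∀ v, (T.induce {i | v ∈ bag i}).Preconnected) :
    RunningIntersection T bag := by
  classical
  intro v i j P hP hi hj k hk
  obtain ⟨W⟩ := h v ⟨i, hi⟩ ⟨j, hj⟩
  let W' : T.Walk i j := W.map (Embedding.induce _).toHom
  have hPW : P = W'.bypass :=
    have := hT.subsingleton_path i j
    congrArg Subtype.val (Subsingleton.elim (⟨P, hP⟩ : T.Path i j) ⟨W'.bypass, W'.bypass_isPath⟩)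
  obtain ⟨w, -, rfl⟩ := List.mem_map.mp (Walk.support_map _ W ▸
    W'.support_bypass_subset_support (hPW ▸ hk))
  exact w.2

theorem RunningIntersection.induce {T : SimpleGraph ι} {bag : ι → Finset V}
    (h : RunningIntersection T bag) (s : Set ι) :
    RunningIntersection (T.induce s) (fun i => bag i) := by
  intro v i j P hP hi hj k hk
  have hPmap := hP.map (f := (Embedding.induce s).toHom) Subtype.val_injective
  exact h v _ hPmap hi hj k (Walk.support_map _ P ▸ List.mem_map_of_mem hk)

theorem RunningIntersection.mem_of_adj_leaf {T : SimpleGraph ι} {bag : ι → Finset V}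
    (h : RunningIntersection T bag) (hT : T.Connected) {ℓ p : ι}
    (hleaf : ∀ q, T.Adj ℓ q → q = p) {i : ι} (hi : i ≠ ℓ) {v : V}
    (hvℓ : v ∈ bag ℓ) (hvi : v ∈ bag i) : v ∈ bag p := by
  obtain ⟨P, hP⟩ := hT.exists_isPath ℓ i
  cases P with
  | nil => exact absurd rfl hi
  | cons hadj Q =>
    exact hleaf _ hadj ▸ h v _ hP hvℓ hvi _ (List.mem_cons_of_mem _ Q.start_mem_support)

end SimpleGraph

theorem SimpleGraph.IsTree.exists_pmf_map_restrict_eq {ι V β : Type*} [Finite ι] [DecidableEq V]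
    [Nonempty β] {T : SimpleGraph ι} (hT : T.IsTree) {bag : ι → Finset V}
    (hR : T.RunningIntersection bag) (D : ∀ i, PMF (bag i → β))
    (hD : ∀ i j, T.Adj i j →
      (D i).map (Finset.restrict₂ (π := fun _ => β) Finset.inter_subset_left) =
        (D j).map (Finset.restrict₂ (π := fun _ => β) Finset.inter_subset_right)) :
    ∃ μ : PMF (V → β), ∀ i, μ.map (bag i).restrict = D i := by
  obtain ⟨n, hn⟩ : ∃ n, Nat.card ι ≤ n := ⟨_, le_rfl⟩
  induction n generalizing ι with
  | zero =>
    have := hT.nonempty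
    exact absurd hn (Nat.card_pos (α := ι)).not_ge
  | succ n ih =>
    rcases subsingleton_or_nontrivial ι with hsub | hnontriv
    · obtain ⟨i₀⟩ := hT.nonempty
      refine ⟨(D i₀).map fun f => Function.extend Subtype.val f fun _ => Classical.arbitrary β,
        fun i => ?_⟩
      obtain rfl := Subsingleton.elim i i₀
      rw [PMF.map_comp]
      convert PMF.map_id (D i)
      funext f v
      exact Subtype.val_injective.extend_apply f (fun _ => Classical.arbitrary β) v
    · have := Fintype.ofFinite ι
      classical
      obtain ⟨ℓ, hℓ⟩ := hT.exists_vert_degree_one_of_nontrivial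
      obtain ⟨p, hℓp, hleaf⟩ := degree_eq_one_iff_existsUnique_adj.mp hℓ
      let s : Set ι := {ℓ}ᶜ
      have hTs : (T.induce s).IsTree :=
        ⟨hT.connected.induce_compl_singleton_of_degree_eq_one hℓ, hT.isAcyclic.induce s⟩
      have hcard : Nat.card s ≤ n :=
        Nat.lt_succ_iff.mp ((Finite.card_subtype_lt (x := ℓ) (by simp [s])).trans_le hn)
      obtain ⟨μ, hμ⟩ := ih hTs (hR.induce s) (fun i => D i) (fun i j h => hD i j h) hcard
      have hps : p ∈ s := hℓp.ne.symm
      obtain ⟨μ', hμ'ℓ, hμ'⟩ := PMF.exists_extend_of_map_restrict_eq μ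
        Finset.inter_subset_right (D ℓ) (by rw [← hD p ℓ hℓp.symm, ← hμ ⟨p, hps⟩, PMF.map_comp]; rfl)
      refine ⟨μ', fun i => ?_⟩
      by_cases hi : i = ℓ
      · exact hi ▸ hμ'ℓ
      · refine (hμ' (bag i) fun v hv => ?_).trans (hμ ⟨i, hi⟩)
        obtain ⟨hvi, hvℓ⟩ := Finset.mem_inter.mp hv
        exact Finset.mem_inter.mpr ⟨hR.mem_of_adj_leaf hT.connected hleaf hi hvℓ hvi, hvℓ⟩

theorem stmt2_general {n : ℕ} {κ ι : Type} [Fintype ι]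
    (scope : κ → Finset (Fin n)) (C : κ → (Fin n → Bool) → Prop)
    (hlocal : ∀ j x y, (∀ v ∈ scope j, x v = y v) → (C j x ↔ C j y))
    (X : Set (Fin n → Bool)) (hX : X = {x | ∀ j, C j x})
    (T : SimpleGraph ι) (bag : ι → Finset (Fin n))
    (htree : T.IsTree)
    (hedges : ∀ j, ∃ i, scope j ⊆ bag i)
    (hconn : ∀ v : Fin n, (∃ i, v ∈ bag i) ∧ (T.induce {i | v ∈ bag i}).Connected)
    (D : (i : ι) → PMF ({v : Fin n // v ∈ bag i} → Bool))
    (hsupp : ∀ i, ∀ f ∈ (D i).support,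
      ∃ x ∈ X, f = fun v : {v : Fin n // v ∈ bag i} => x v.1)
    (hagree : ∀ i j, T.Adj i j →
      (D i).map (fun f (v : {v : Fin n // v ∈ bag i ∩ bag j}) =>
          f ⟨v.1, (Finset.mem_inter.mp v.2).1⟩) =
      (D j).map (fun f (v : {v : Fin n // v ∈ bag i ∩ bag j}) =>
          f ⟨v.1, (Finset.mem_inter.mp v.2).2⟩)) :
    ∃ D' : PMF (Fin n → Bool),
      D'.support ⊆ X ∧
      ∀ i : ι, D'.map (fun x (v : {v : Fin n // v ∈ bag i}) => x v.1) = D i := by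
  have hR : T.RunningIntersection bag :=
    SimpleGraph.runningIntersection_of_preconnected_induce htree.isAcyclic
      fun v => (hconn v).2.preconnected
  obtain ⟨μ, hμ⟩ := htree.exists_pmf_map_restrict_eq hR D hagree
  refine ⟨μ, fun x hx => ?_, hμ⟩
  rw [hX]
  intro j
  obtain ⟨i, hji⟩ := hedges j
  obtain ⟨y, hyX, hxy⟩ := hsupp i ((bag i).restrict x)
    (hμ i ▸ (PMF.mem_support_map_iff _ _ _).mpr ⟨x, hx, rfl⟩)
  rw [hX] at hyX
  exact (hlocal j x y fun v hv => congrFun hxy ⟨v, hji hv⟩).mpr (hyX j)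

/-- Let `X ⊆ {0,1}^n` be the solution set of a system of constraints
(constraint `j` has scope `scope j`, and depends only on the variables in its scope).
Let `T` with bags `bag` be a tree decomposition of the dependency hypergraph (every
scope is contained in some bag, and every variable lies in a nonempty connected set of
bags). For each bag `i` let `D i` be a distribution supported on the locally feasible
vectors on `bag i` (restrictions to `bag i` of elements of `X`). If adjacent bags agree
on marginals over their intersections, then there is a distribution supported on `X`
whose marginal on each bag `i` is `D i`. -/
theorem stmt2 {n : ℕ} {κ ι : Type} [Fintype κ] [Fintype ι]
    (scope : κ → Finset (Fin n)) (C : κ → (Fin n → Bool) → Prop)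
    (hlocal : ∀ j x y, (∀ v ∈ scope j, x v = y v) → (C j x ↔ C j y))
    (X : Set (Fin n → Bool)) (hX : X = {x | ∀ j, C j x})
    (T : SimpleGraph ι) (bag : ι → Finset (Fin n))
    (htree : T.IsTree)
    (hedges : ∀ j, ∃ i, scope j ⊆ bag i)
    (hconn : ∀ v : Fin n, (∃ i, v ∈ bag i) ∧ (T.induce {i | v ∈ bag i}).Connected)
    (D : (i : ι) → PMF ({v : Fin n // v ∈ bag i} → Bool))
    (hsupp : ∀ i, ∀ f ∈ (D i).support,
      ∃ x ∈ X, f = fun v : {v : Fin n // v ∈ bag i} => x v.1)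
    (hagree : ∀ i j, T.Adj i j →
      (D i).map (fun f (v : {v : Fin n // v ∈ bag i ∩ bag j}) =>
          f ⟨v.1, (Finset.mem_inter.mp v.2).1⟩) =
      (D j).map (fun f (v : {v : Fin n // v ∈ bag i ∩ bag j}) =>
          f ⟨v.1, (Finset.mem_inter.mp v.2).2⟩)) :
    ∃ D' : PMF (Fin n → Bool),
      D'.support ⊆ X ∧
      ∀ i : ι, D'.map (fun x (v : {v : Fin n // v ∈ bag i}) => x v.1) = D i :=
  stmt2_general scope C hlocal X hX T bag htree hedges hconn D hsupp hagree
end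

section
/- The bags C = C⁻ ∪ C⁺ ranging over public nodes C⁻, with edges between bags C₁ and C₂ when one contains a parent of a node of the other, form a valid tree decomposition of the dependency hypergraph of the realization-plan constraint system: every constraint's variables lie in a single bag, and each tree node appears in exactly the bags forming a nonempty connected subtree (at most two adjacent bags). -/
/-- Ancestor relation generated by a parent map. -/
def anc {H : Type*} (par : H → Option H) : H → H → Prop :=
  Relation.ReflTransGen (fun g h => par h = some g)

/-- `h ⪯ I` : `h` has a descendant in `I`. -/
def precedesSet {H : Type*} (par : H → Option H) (h : H) (I : Set H) : Prop :=
  ∃ g ∈ I, anc par h g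

/-- The relation `∼` on nodes of the game tree. -/
def simRel {H : Type*} (par : H → Option H) (depth : H → ℕ)
    (infosets : Set (Set H)) (h₁ h₂ : H) : Prop :=
  depth h₁ = depth h₂ ∧ ∃ I ∈ infosets, precedesSet par h₁ I ∧ precedesSet par h₂ I

/-- The setoid of public nodes. -/
def pubSetoid {H : Type*} (par : H → Option H) (depth : H → ℕ)
    (infosets : Set (Set H)) : Setoid H :=
  ⟨Relation.EqvGen (simRel par depth infosets),
   Relation.EqvGen.is_equivalence _⟩

/-- The graph on public nodes/bags: an edge when one bag contains a parent of a node of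
the other. -/
def publicGraph {H : Type*} (par : H → Option H) (depth : H → ℕ)
    (infosets : Set (Set H)) :
    SimpleGraph (Quotient (pubSetoid par depth infosets)) :=
  SimpleGraph.fromRel (fun q₁ q₂ => ∃ h g : H, par h = some g ∧
    Quotient.mk (pubSetoid par depth infosets) g = q₁ ∧
    Quotient.mk (pubSetoid par depth infosets) h = q₂)

/-- The bag `C = C⁻ ∪ C⁺` of a public node `q`: the nodes of the public node together
with all their children. -/
def publicBag {H : Type*} (par : H → Option H) (depth : H → ℕ)
    (infosets : Set (Set H)) (q : Quotient (pubSetoid par depth infosets)) : Set H :=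
  {h | Quotient.mk (pubSetoid par depth infosets) h = q} ∪
  {h | ∃ g, par h = some g ∧ Quotient.mk (pubSetoid par depth infosets) g = q}

/-- The hyperedges of the dependency hypergraph of the realization-plan constraint
system: one hyperedge `{h} ∪ children(h)` for each team decision node `h`; one
hyperedge `{h, ha}` for each other nonterminal node `h` and child `ha`; and one
hyperedge `{ha, h', h'a, h}` for each team infoset `I`, nodes `h, h' ∈ I` and common
action label `a` (from the bilinear constraint `x(ha)x(h') = x(h'a)x(h)`). -/
def depHyperedges {H A : Type*} (par : H → Option H) (lab : H → A)
    (plus : H → Prop) (infosets : Set (Set H)) : Set (Set H) :=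
  {e | ∃ h, plus h ∧ (∃ k, par k = some h) ∧ e = insert h {k | par k = some h}} ∪
  {e | ∃ h k, ¬ plus h ∧ par k = some h ∧ e = {h, k}} ∪
  {e | ∃ I ∈ infosets, ∃ h ∈ I, ∃ h' ∈ I, ∃ k k',
        par k = some h ∧ par k' = some h' ∧ lab k = lab k' ∧ e = {k, h', k', h}}

/-!
Public nodes have constant depth, and `∼`-equivalent nodes have `∼`-equivalent parents. Hence
two adjacent bags differ in depth, and every bag except the root's has exactly one neighbour of
smaller depth, namely the bag of its parents: such a graph is a tree. A node lies only in its
own bag and in its parent's bag, which are adjacent, and each constraint lives in the bag of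
the public node containing its parent nodes.
-/

namespace SimpleGraph

variable {V : Type*} {G : SimpleGraph V}

theorem reachable_of_exists_adj_lt (f : V → ℕ) (r : V)
    (hlower : ∀ v, v ≠ r → ∃ u, G.Adj u v ∧ f u < f v) (v : V) : G.Reachable r v := by
  induction hn : f v using Nat.strong_induction_on generalizing v with
  | _ n ih =>
    by_cases hv : v = r
    · exact hv ▸ Reachable.refl v
    · obtain ⟨u, huv, hlt⟩ := hlower v hv
      exact (ih (f u) (hn ▸ hlt) u rfl).trans huv.reachable

/-- Rotate a cycle to start at a vertex `u` of maximal `f`: both cycle neighbours of `u`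
are then lower neighbours, hence equal, which a cycle forbids. -/
theorem isAcyclic_of_unique_lower_neighbor (f : V → ℕ)
    (hne : ∀ u v, G.Adj u v → f u ≠ f v)
    (huniq : ∀ v a b, G.Adj a v → G.Adj b v → f a < f v → f b < f v → a = b) :
    G.IsAcyclic := by
  classical
  intro v c hc
  obtain ⟨u, hu, hmax⟩ := c.support.toFinset.exists_max_image f ⟨v, by simp⟩
  rw [List.mem_toFinset] at hu
  have hc' := hc.rotate hu
  have hlow : ∀ w ∈ (c.rotate u hu).support, G.Adj w u → f w < f u := fun w hw hadj =>
    lt_of_le_of_ne (hmax w (List.mem_toFinset.mpr ((c.mem_support_rotate_iff u hu).mp hw)))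
      (hne w u hadj)
  have hsnd := (Walk.adj_snd hc'.not_nil).symm
  have hpen := Walk.adj_penultimate hc'.not_nil
  exact hc'.snd_ne_penultimate <| huniq u _ _ hsnd hpen
    (hlow _ (Walk.getVert_mem_support _ _) hsnd) (hlow _ (Walk.getVert_mem_support _ _) hpen)

theorem isTree_of_unique_lower_neighbor (f : V → ℕ) (r : V)
    (hne : ∀ u v, G.Adj u v → f u ≠ f v)
    (hlower : ∀ v, v ≠ r → ∃ u, G.Adj u v ∧ f u < f v)
    (huniq : ∀ v a b, G.Adj a v → G.Adj b v → f a < f v → f b < f v → a = b) :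
    G.IsTree :=
  have : Nonempty V := ⟨r⟩
  ⟨⟨fun u v => (reachable_of_exists_adj_lt f r hlower u).symm.trans
      (reachable_of_exists_adj_lt f r hlower v)⟩,
    isAcyclic_of_unique_lower_neighbor f hne huniq⟩

end SimpleGraph

section PublicNodes

open SimpleGraph

variable {H : Type*} {par : H → Option H} {depth : H → ℕ} {infosets : Set (Set H)}

local notation "mk" => Quotient.mk (pubSetoid par depth infosets)

theorem depth_eq_of_eqvGen_simRel {h h' : H}
    (e : Relation.EqvGen (simRel par depth infosets) h h') : depth h = depth h' := by
  induction e with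
  | rel _ _ hr => exact hr.1
  | refl => rfl
  | symm _ _ _ ih => exact ih.symm
  | trans _ _ _ _ _ ih₁ ih₂ => exact ih₁.trans ih₂

variable (par depth infosets) in
def pubDepth : Quotient (pubSetoid par depth infosets) → ℕ :=
  Quotient.lift depth fun _ _ => depth_eq_of_eqvGen_simRel

@[simp]
theorem pubDepth_mk (h : H) : pubDepth par depth infosets (mk h) = depth h :=
  rfl

theorem precedesSet_of_par_eq_some {h g : H} {I : Set H} (hp : par h = some g)
    (hpre : precedesSet par h I) : precedesSet par g I :=
  let ⟨x, hx, hanc⟩ := hpre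
  ⟨x, hx, Relation.ReflTransGen.head hp hanc⟩

theorem simRel_of_par_eq_some (hdepth : ∀ h g : H, par h = some g → depth h = depth g + 1)
    {h h' g g' : H} (hs : simRel par depth infosets h h')
    (hp : par h = some g) (hp' : par h' = some g') : simRel par depth infosets g g' := by
  obtain ⟨hd, I, hI, hpre, hpre'⟩ := hs
  refine ⟨?_, I, hI, precedesSet_of_par_eq_some hp hpre, precedesSet_of_par_eq_some hp' hpre'⟩
  have := hdepth h g hp
  have := hdepth h' g' hp'
  omega

theorem par_isSome_iff {root : H} (hdroot : depth root = 0)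
    (hdepth : ∀ h g : H, par h = some g → depth h = depth g + 1)
    (hpar : ∀ h : H, h ≠ root → (par h).isSome) (h : H) :
    (par h).isSome ↔ depth h ≠ 0 := by
  refine ⟨fun hs => ?_, fun h0 => hpar h fun hr => h0 (hr ▸ hdroot)⟩
  obtain ⟨g, hg⟩ := Option.isSome_iff_exists.mp hs
  simp [hdepth h g hg]

/-- `∼` preserves depth and only depth-`0` nodes lack a parent, so two `∼`-related nodes
either both have a parent or neither has. -/
theorem map_par_eq_of_eqvGen_simRel {root : H} (hdroot : depth root = 0)
    (hdepth : ∀ h g : H, par h = some g → depth h = depth g + 1)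
    (hpar : ∀ h : H, h ≠ root → (par h).isSome) {h h' : H}
    (e : Relation.EqvGen (simRel par depth infosets) h h') :
    (par h).map mk = (par h').map mk := by
  induction e with
  | refl => rfl
  | symm _ _ _ ih => exact ih.symm
  | trans _ _ _ _ _ ih₁ ih₂ => exact ih₁.trans ih₂
  | rel a b hr =>
    have hsome : (par a).isSome = (par b).isSome := by
      rw [Bool.eq_iff_iff, par_isSome_iff hdroot hdepth hpar,
        par_isSome_iff hdroot hdepth hpar, hr.1]
    rcases ha : par a with _ | g <;> rcases hb : par b with _ | g'
    · rfl
    · simp [ha, hb] at hsome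
    · simp [ha, hb] at hsome
    · exact congrArg some <|
        Quotient.sound (Relation.EqvGen.rel _ _ (simRel_of_par_eq_some hdepth hr ha hb))

theorem mk_eq_mk_of_par_eq_some {root : H} (hdroot : depth root = 0)
    (hdepth : ∀ h g : H, par h = some g → depth h = depth g + 1)
    (hpar : ∀ h : H, h ≠ root → (par h).isSome) {h h' g g' : H} (hh : mk h = mk h')
    (hp : par h = some g) (hp' : par h' = some g') : mk g = mk g' := by
  simpa [hp, hp'] using map_par_eq_of_eqvGen_simRel hdroot hdepth hpar (Quotient.exact hh)

theorem publicGraph_adj_of_par_eq_some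
    (hdepth : ∀ h g : H, par h = some g → depth h = depth g + 1) {h g : H}
    (hp : par h = some g) : (publicGraph par depth infosets).Adj (mk g) (mk h) := by
  refine (fromRel_adj ..).mpr ⟨fun heq => ?_, .inl ⟨h, g, hp, rfl, rfl⟩⟩
  have := congrArg (pubDepth par depth infosets) heq
  simp [hdepth h g hp] at this

theorem pubDepth_ne_of_adj (hdepth : ∀ h g : H, par h = some g → depth h = depth g + 1)
    {a b : Quotient (pubSetoid par depth infosets)}
    (hab : (publicGraph par depth infosets).Adj a b) :
    pubDepth par depth infosets a ≠ pubDepth par depth infosets b := by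
  obtain ⟨-, ⟨h, g, hp, rfl, rfl⟩ | ⟨h, g, hp, rfl, rfl⟩⟩ := (fromRel_adj ..).mp hab <;>
    simp [hdepth h g hp]

theorem exists_par_eq_some_of_adj_of_pubDepth_lt
    (hdepth : ∀ h g : H, par h = some g → depth h = depth g + 1)
    {a v : Quotient (pubSetoid par depth infosets)}
    (hav : (publicGraph par depth infosets).Adj a v)
    (hlt : pubDepth par depth infosets a < pubDepth par depth infosets v) :
    ∃ h g, par h = some g ∧ mk g = a ∧ mk h = v := by
  obtain ⟨-, hrel | ⟨h, g, hp, rfl, rfl⟩⟩ := (fromRel_adj ..).mp hav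
  · exact hrel
  · simp [hdepth h g hp] at hlt

theorem publicGraph_isTree {root : H} (hdroot : depth root = 0)
    (hdepth : ∀ h g : H, par h = some g → depth h = depth g + 1)
    (hpar : ∀ h : H, h ≠ root → (par h).isSome) :
    (publicGraph par depth infosets).IsTree := by
  refine isTree_of_unique_lower_neighbor (pubDepth par depth infosets) (mk root)
    (fun _ _ => pubDepth_ne_of_adj hdepth) (fun v hv => ?_) (fun v a b ha hb hla hlb => ?_)
  · induction v using Quotient.inductionOn with | _ h => ?_
    obtain ⟨g, hg⟩ := Option.isSome_iff_exists.mp (hpar h fun hr => hv (hr ▸ rfl))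
    exact ⟨mk g, publicGraph_adj_of_par_eq_some hdepth hg, by simp [hdepth h g hg]⟩
  · obtain ⟨h, g, hp, rfl, hv⟩ := exists_par_eq_some_of_adj_of_pubDepth_lt hdepth ha hla
    obtain ⟨h', g', hp', rfl, rfl⟩ := exists_par_eq_some_of_adj_of_pubDepth_lt hdepth hb hlb
    exact mk_eq_mk_of_par_eq_some hdroot hdepth hpar hv hp hp'

theorem mem_publicBag_mk (h : H) : h ∈ publicBag par depth infosets (mk h) :=
  .inl rfl

theorem mem_publicBag_of_par_eq_some {k h : H} (hp : par k = some h) :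
    k ∈ publicBag par depth infosets (mk h) :=
  .inr ⟨h, hp, rfl⟩

theorem mk_eq_mk_of_mem_infoset
    (hthin : ∀ I ∈ infosets, ∀ h ∈ I, ∀ h' ∈ I, depth h = depth h')
    {I : Set H} (hI : I ∈ infosets) {h h' : H} (hh : h ∈ I) (hh' : h' ∈ I) : mk h = mk h' :=
  Quotient.sound <| Relation.EqvGen.rel _ _
    ⟨hthin I hI h hh h' hh', I, hI, ⟨h, hh, .refl⟩, ⟨h', hh', .refl⟩⟩

theorem exists_subset_publicBag_of_mem_depHyperedges {A : Type*} {lab : H → A}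
    {plus : H → Prop} (hthin : ∀ I ∈ infosets, ∀ h ∈ I, ∀ h' ∈ I, depth h = depth h')
    {e : Set H} (he : e ∈ depHyperedges par lab plus infosets) :
    ∃ q, e ⊆ publicBag par depth infosets q := by
  rcases he with (⟨h, -, -, rfl⟩ | ⟨h, k, -, hk, rfl⟩) |
    ⟨I, hI, h, hh, h', hh', k, k', hk, hk', -, rfl⟩
  · exact ⟨mk h, Set.insert_subset (mem_publicBag_mk h) fun _ => mem_publicBag_of_par_eq_some⟩
  · exact ⟨mk h, Set.pair_subset (mem_publicBag_mk h) (mem_publicBag_of_par_eq_some hk)⟩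
  · have hmk : mk h = mk h' := mk_eq_mk_of_mem_infoset hthin hI hh hh'
    refine ⟨mk h, ?_⟩
    simp only [Set.insert_subset_iff, Set.singleton_subset_iff]
    exact ⟨mem_publicBag_of_par_eq_some hk, hmk ▸ mem_publicBag_mk h',
      hmk ▸ mem_publicBag_of_par_eq_some hk', mem_publicBag_mk h⟩

theorem setOf_mem_publicBag_of_par_eq_none {h : H} (hp : par h = none) :
    {q | h ∈ publicBag par depth infosets q} = {mk h} := by
  ext q
  simp [publicBag, hp, eq_comm]

theorem setOf_mem_publicBag_of_par_eq_some {h g : H} (hp : par h = some g) :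
    {q | h ∈ publicBag par depth infosets q} = {mk g, mk h} := by
  ext q
  simp [publicBag, hp, eq_comm, or_comm]

theorem connected_induce_setOf_mem_publicBag
    (hdepth : ∀ h g : H, par h = some g → depth h = depth g + 1) (h : H) :
    ((publicGraph par depth infosets).induce
      {q | h ∈ publicBag par depth infosets q}).Connected := by
  cases hp : par h with
  | none =>
    rw [setOf_mem_publicBag_of_par_eq_none hp]
    exact Connected.of_subsingleton
  | some g =>
    rw [setOf_mem_publicBag_of_par_eq_some hp]
    exact induce_pair_connected_of_adj (publicGraph_adj_of_par_eq_some hdepth hp)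

theorem encard_setOf_mem_publicBag_le_two (h : H) :
    {q | h ∈ publicBag par depth infosets q}.encard ≤ 2 := by
  cases hp : par h with
  | none => simp [setOf_mem_publicBag_of_par_eq_none hp]
  | some g =>
    rw [setOf_mem_publicBag_of_par_eq_some hp]
    exact (Set.encard_insert_le _ _).trans (by norm_num)

end PublicNodes

theorem stmt7_general {H A : Type*} (par : H → Option H) (lab : H → A)
    (depth : H → ℕ) (plus : H → Prop) (infosets : Set (Set H)) (root : H)
    (hthin : ∀ I ∈ infosets, ∀ h ∈ I, ∀ h' ∈ I, depth h = depth h')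
    (hdroot : depth root = 0)
    (hdepth : ∀ h g : H, par h = some g → depth h = depth g + 1)
    (hpar : ∀ h : H, h ≠ root → (par h).isSome) :
    (publicGraph par depth infosets).IsTree ∧
    (∀ e ∈ depHyperedges par lab plus infosets,
      ∃ q, e ⊆ publicBag par depth infosets q) ∧
    (∀ h : H,
      (∃ q, h ∈ publicBag par depth infosets q) ∧
      ((publicGraph par depth infosets).induce
        {q | h ∈ publicBag par depth infosets q}).Connected ∧
      {q | h ∈ publicBag par depth infosets q}.encard ≤ 2) :=
  ⟨publicGraph_isTree hdroot hdepth hpar,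
    fun _ he => exists_subset_publicBag_of_mem_depHyperedges hthin he,
    fun h => ⟨⟨_, mem_publicBag_mk h⟩, connected_induce_setOf_mem_publicBag hdepth h,
      encard_setOf_mem_publicBag_le_two h⟩⟩

/-- The bags `C = C⁻ ∪ C⁺` over public nodes `C⁻`, with edges between
bags when one contains a parent of a node of the other, form a valid tree decomposition
of the dependency hypergraph of the realization-plan constraint system: the graph is a
tree, every constraint's variables lie in a single bag, and each game-tree node appears
in a nonempty connected set of bags of size at most two. -/
theorem stmt7 {H A : Type*} [Fintype H] (par : H → Option H) (lab : H → A)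
    (depth : H → ℕ) (plus : H → Prop) (infosets : Set (Set H)) (root : H)
    (hthin : ∀ I ∈ infosets, ∀ h ∈ I, ∀ h' ∈ I, depth h = depth h')
    (hplus : ∀ I ∈ infosets, ∀ h ∈ I, plus h)
    (hsameact : ∀ I ∈ infosets, ∀ h ∈ I, ∀ h' ∈ I, ∀ k, par k = some h →
      ∃ k', par k' = some h' ∧ lab k' = lab k)
    (hroot : par root = none) (hdroot : depth root = 0)
    (hdepth : ∀ h g : H, par h = some g → depth h = depth g + 1)
    (hpar : ∀ h : H, h ≠ root → (par h).isSome) :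
    (publicGraph par depth infosets).IsTree ∧
    (∀ e ∈ depHyperedges par lab plus infosets,
      ∃ q, e ⊆ publicBag par depth infosets q) ∧
    (∀ h : H,
      (∃ q, h ∈ publicBag par depth infosets q) ∧
      ((publicGraph par depth infosets).induce
        {q | h ∈ publicBag par depth infosets q}).Connected ∧
      {q | h ∈ publicBag par depth infosets q}.encard ≤ 2) :=
  stmt7_general par lab depth plus infosets root hthin hdroot hdepth hpar
end
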